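/- For every nonzero rational number t and every natural number n, the sum over k from 0 to n of ((-1)^k / t^k) * (L_{k+1} + (t - 2) * F_k) equals ((-1)^n / t^n) * F_{n+1}. -/
import Mathlib


def lucas : ℕ → ℕ
  | 0 => 2
  | 1 => 1
  | n + 2 => lucas (n + 1) + lucas n

lemma lucas_eq (n : ℕ) : lucas (n + 1) = Nat.fib (n + 1) + 2 * Nat.fib n := by
  induction n using Nat.strong_induction_on with
  | _ n ih =>
    match n with
    | 0 => rfl
    | 1 => rfl
    | m + 2 =>
      rw [show m + 2 + 1 = (m + 1) + 2 from rfl, lucas, ih (m + 1) (by omega),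
        ih m (by omega)]
      have := Nat.fib_add_two (n := m)
      have := Nat.fib_add_two (n := m + 1)
      omega

theorem gb_martinjak (t : ℚ) (ht : t ≠ 0) (n : ℕ) :
    ∑ k ∈ Finset.range (n + 1),
        ((-1 : ℚ) ^ k / t ^ k) * ((lucas (k + 1) : ℚ) + (t - 2) * (Nat.fib k : ℚ)) =
      ((-1 : ℚ) ^ n / t ^ n) * (Nat.fib (n + 1) : ℚ) := by
  induction n with
  | zero => simp [lucas]
  | succ n ih =>
    rw [Finset.sum_range_succ, ih, lucas_eq (n + 1), Nat.fib_add_two]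
    push_cast
    field_simp
    ring
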